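/- arXiv:1411.6761 — 3 statements merged into one kernel-verified Lean document; each statement's English description precedes it below -/
import Mathlib

section
/- Let H be a real Hilbert space, A a self-adjoint nonnegative bounded operator on H, Q the orthogonal projection onto (ker A)^⊥ satisfying |Qu|² ≤ (1/ν)|A^{1/2}u|² for some ν > 0 and all u. Let δ > 0, μ = min{1/2, ν/2, δ/2, ν/(5δ)}, let g : [0,∞) → H be continuous, and let u be a C² solution of u''(t) + 2δu'(t) + Au(t) = g(t). Define Ê(t) = |u'(t)|² + |A^{1/2}u(t)|² + 2μ⟨u'(t), Qu(t)⟩. Then for all t ≥ 0: Ê'(t) ≤ -(μ/2) Ê(t) + (2/δ)|g(t)|². -/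
/-!
Differentiating `Ê` and eliminating `u''` through the equation gives
`Ê' = 2⟪g, u'⟫ - 4δ|u'|² + 2μ⟪g, Qu⟫ - 4μδ⟪u', Qu⟫ - 2μ|A^{1/2}u|² + 2μ⟪u', Qu'⟫`,
where `⟪Au, Qu⟫ = |A^{1/2}u|²` because `Q` fixes the range of `A`. The forcing terms are
absorbed by Young's inequality at the price of `(2/δ)|g|²`, and the cross term `⟪u', Qu⟫` is
controlled by the Poincaré-type bound `ν|Qu|² ≤ |A^{1/2}u|²`; the two constraints `μ ≤ δ/2`
and `5δμ ≤ ν` leave enough of the damping `-4δ|u'|²` and of `-2μ|A^{1/2}u|²` to dominate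
`(μ/2)Ê`.
-/

open scoped RealInnerProductSpace

section ModifiedEnergy

variable {H : Type*} [NormedAddCommGroup H] [InnerProductSpace ℝ H]

/-- `Ê(t) = modifiedEnergy S Q μ (u' t) (u t)`, with `S` in the role of `A^{1/2}`. -/
def modifiedEnergy (S Q : H →L[ℝ] H) (μ : ℝ) (v w : H) : ℝ :=
  ‖v‖ ^ 2 + ‖S w‖ ^ 2 + 2 * μ * ⟪v, Q w⟫

section Operators

variable {A S Q : H →L[ℝ] H}

lemma real_inner_apply_self_eq_norm_sq_of_comp_self (hQ : (Q : H →ₗ[ℝ] H).IsSymmetric)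
    (hQQ : Q.comp Q = Q) (v : H) : ⟪v, Q v⟫ = ‖Q v‖ ^ 2 := by
  calc ⟪v, Q v⟫ = ⟪v, Q (Q v)⟫ := by rw [← ContinuousLinearMap.comp_apply, hQQ]
    _ = ‖Q v‖ ^ 2 := by rw [← hQ.apply_clm, real_inner_self_eq_norm_sq]

lemma real_inner_apply_self_le_norm_sq_of_comp_self (hQ : (Q : H →ₗ[ℝ] H).IsSymmetric)
    (hQQ : Q.comp Q = Q) (v : H) : ⟪v, Q v⟫ ≤ ‖v‖ ^ 2 := by
  have h := real_inner_le_norm v (Q v)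
  rw [real_inner_apply_self_eq_norm_sq_of_comp_self hQ hQQ] at h ⊢
  nlinarith [norm_nonneg v, norm_nonneg (Q v)]

lemma apply_apply_eq_of_range_eq_ker_orthogonal (hA : (A : H →ₗ[ℝ] H).IsSymmetric)
    (hQQ : Q.comp Q = Q)
    (hQA : LinearMap.range (Q : H →ₗ[ℝ] H) = (LinearMap.ker (A : H →ₗ[ℝ] H))ᗮ) (x : H) :
    Q (A x) = A x := by
  have hAx : A x ∈ LinearMap.range (Q : H →ₗ[ℝ] H) := by
    rw [hQA, ← hA.orthogonal_range]
    exact Submodule.le_orthogonal_orthogonal _ (LinearMap.mem_range_self _ x)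
  obtain ⟨y, hy⟩ := hAx
  rw [← hy]
  exact congrArg (· y) hQQ

lemma real_inner_apply_apply_of_comp_self_eq (hS : (S : H →ₗ[ℝ] H).IsSymmetric)
    (hSA : S.comp S = A) (x y : H) : ⟪S x, S y⟫ = ⟪A x, y⟫ := by
  rw [← hS.apply_clm, ← ContinuousLinearMap.comp_apply, hSA]

end Operators

lemma hasDerivAt_modifiedEnergy (S Q : H →L[ℝ] H) (μ : ℝ) {v w : ℝ → H} {v' w' : H}
    {t : ℝ} (hv : HasDerivAt v v' t) (hw : HasDerivAt w w' t) :
    HasDerivAt (fun s ↦ modifiedEnergy S Q μ (v s) (w s))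
      (2 * ⟪v t, v'⟫ + 2 * ⟪S (w t), S w'⟫ + 2 * μ * (⟪v t, Q w'⟫ + ⟪v', Q (w t)⟫)) t := by
  have hSw : HasDerivAt (fun s ↦ S (w s)) (S w') t := S.hasFDerivAt.comp_hasDerivAt t hw
  have hQw : HasDerivAt (fun s ↦ Q (w s)) (Q w') t := Q.hasFDerivAt.comp_hasDerivAt t hw
  exact (hv.norm_sq.add hSw.norm_sq).add ((hv.inner ℝ hQw).const_mul (2 * μ))

lemma dissipation_le_of_poincare {ν δ μ : ℝ} (hδ : 0 < δ) (hμ : 0 < μ) (hμδ : μ ≤ δ / 2)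
    (hμν : 5 * δ * μ ≤ ν) (v w f : H) (b Y : ℝ) (hw : ν * ‖w‖ ^ 2 ≤ b ^ 2)
    (hY : Y ≤ ‖v‖ ^ 2) :
    2 * ⟪f, v⟫ - 4 * δ * ‖v‖ ^ 2 + 2 * μ * ⟪f, w⟫ - 4 * μ * δ * ⟪v, w⟫ - 2 * μ * b ^ 2
        + 2 * μ * Y
      ≤ -(μ / 2) * (‖v‖ ^ 2 + b ^ 2 + 2 * μ * ⟪v, w⟫) + (2 / δ) * ‖f‖ ^ 2 := by
  set a := ‖v‖
  set c := ‖w‖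
  set G := ‖f‖
  set X := ⟪v, w⟫
  have ha : 0 ≤ a := norm_nonneg v
  have hc : 0 ≤ c := norm_nonneg w
  have hν : 0 < ν := by nlinarith [mul_pos hδ hμ]
  have hX : -X ≤ a * c := (neg_le_abs X).trans (abs_real_inner_le_norm v w)
  have young_v : 2 * ⟪f, v⟫ ≤ G ^ 2 / δ + δ * a ^ 2 := by
    rw [div_add' _ _ _ hδ.ne', le_div_iff₀ hδ]
    nlinarith [sq_nonneg (G - δ * a), real_inner_le_norm f v]
  have young_w : 2 * μ * ⟪f, w⟫ ≤ G ^ 2 / δ + δ * μ ^ 2 * c ^ 2 := by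
    rw [div_add' _ _ _ hδ.ne', le_div_iff₀ hδ]
    nlinarith [sq_nonneg (G - δ * μ * c),
      mul_le_mul_of_nonneg_left (real_inner_le_norm f w) (mul_nonneg hμ.le hδ.le)]
  have hc_b : δ * μ ^ 2 * c ^ 2 ≤ μ / 5 * b ^ 2 := by
    nlinarith [mul_le_mul_of_nonneg_left hμν (mul_nonneg hμ.le (sq_nonneg c))]
  have cross : (μ ^ 2 - 4 * μ * δ) * X ≤ 4 * μ * δ * (a * c) := by
    nlinarith [mul_le_mul_of_nonneg_left hX (by nlinarith : 0 ≤ 4 * μ * δ - μ ^ 2),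
      mul_nonneg (sq_nonneg μ) (mul_nonneg ha hc)]
  -- Young's inequality `4δac ≤ 4δ²a²/ν + νc²`, cleared of the denominator `ν`
  have hac : 4 * μ * δ * (a * c) ≤ 4 * δ / 5 * a ^ 2 + μ * b ^ 2 := by
    refine le_of_mul_le_mul_left ?_ hν
    nlinarith [mul_nonneg hμ.le (sq_nonneg (2 * δ * a - ν * c)),
      mul_le_mul_of_nonneg_left hμν (mul_nonneg hδ.le (sq_nonneg a)),
      mul_le_mul_of_nonneg_left hw (mul_nonneg hμ.le hν.le)]
  have h2G : (2 / δ) * G ^ 2 = G ^ 2 / δ + G ^ 2 / δ := by ring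
  linarith [mul_le_mul_of_nonneg_left hY hμ.le, mul_le_mul_of_nonneg_right hμδ (sq_nonneg a),
    mul_nonneg hδ.le (sq_nonneg a), mul_nonneg hμ.le (sq_nonneg b)]

lemma rate_of_modifiedEnergy_le {A S Q : H →L[ℝ] H} (hA : (A : H →ₗ[ℝ] H).IsSymmetric)
    (hS : (S : H →ₗ[ℝ] H).IsSymmetric) (hSA : S.comp S = A) (hQQ : Q.comp Q = Q)
    (hQ : (Q : H →ₗ[ℝ] H).IsSymmetric)
    (hQA : LinearMap.range (Q : H →ₗ[ℝ] H) = (LinearMap.ker (A : H →ₗ[ℝ] H))ᗮ)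
    {ν δ μ : ℝ} (hδ : 0 < δ) (hμ : 0 < μ) (hμδ : μ ≤ δ / 2) (hμν : 5 * δ * μ ≤ ν)
    (hQS : ∀ w : H, ‖Q w‖ ^ 2 ≤ (1 / ν) * ‖S w‖ ^ 2) (v w f : H) :
    let v' := f - (2 * δ) • v - A w
    2 * ⟪v, v'⟫ + 2 * ⟪S w, S v⟫ + 2 * μ * (⟪v, Q v⟫ + ⟪v', Q w⟫)
      ≤ -(μ / 2) * modifiedEnergy S Q μ v w + (2 / δ) * ‖f‖ ^ 2 := by
  intro v'
  have hν : 0 < ν := by nlinarith [mul_pos hδ hμ]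
  have hAQ : ⟪A w, Q w⟫ = ‖S w‖ ^ 2 := by
    rw [← hQ.apply_clm, apply_apply_eq_of_range_eq_ker_orthogonal hA hQQ hQA,
      ← real_inner_apply_apply_of_comp_self_eq hS hSA, real_inner_self_eq_norm_sq]
  have hPoincare : ν * ‖Q w‖ ^ 2 ≤ ‖S w‖ ^ 2 := by
    have := mul_le_mul_of_nonneg_left (hQS w) hν.le
    rwa [← mul_assoc, mul_one_div_cancel hν.ne', one_mul] at this
  have hE : 2 * ⟪v, v'⟫ + 2 * ⟪S w, S v⟫ + 2 * μ * (⟪v, Q v⟫ + ⟪v', Q w⟫)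
      = 2 * ⟪f, v⟫ - 4 * δ * ‖v‖ ^ 2 + 2 * μ * ⟪f, Q w⟫ - 4 * μ * δ * ⟪v, Q w⟫
        - 2 * μ * ‖S w‖ ^ 2 + 2 * μ * ⟪v, Q v⟫ := by
    simp only [v', inner_sub_left, inner_sub_right, real_inner_smul_left, real_inner_smul_right,
      real_inner_apply_apply_of_comp_self_eq hS hSA, hAQ, real_inner_self_eq_norm_sq,
      real_inner_comm v f, real_inner_comm v (A w)]
    ring
  rw [hE]
  exact dissipation_le_of_poincare hδ hμ hμδ hμν v (Q w) f _ _ hPoincare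
    (real_inner_apply_self_le_norm_sq_of_comp_self hQ hQQ v)

end ModifiedEnergy

theorem stmt9_general {H : Type*} [NormedAddCommGroup H] [InnerProductSpace ℝ H] [CompleteSpace H]
    (A S Q : H →L[ℝ] H)
    (hA : IsSelfAdjoint A)
    (hS : IsSelfAdjoint S) (hSA : S.comp S = A)
    (hQ1 : Q.comp Q = Q) (hQ2 : IsSelfAdjoint Q)
    (hQ3 : LinearMap.range (Q : H →ₗ[ℝ] H) = (LinearMap.ker (A : H →ₗ[ℝ] H))ᗮ)
    (ν δ : ℝ) (hν : 0 < ν) (hδ : 0 < δ)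
    (hQbound : ∀ u : H, ‖Q u‖^2 ≤ (1/ν) * ‖S u‖^2)
    (μ : ℝ) (hμ : μ = min (min (1/2) (ν/2)) (min (δ/2) (ν/(5*δ))))
    (g : ℝ → H)
    (u : ℝ → H) (hu : ContDiff ℝ 2 u)
    (hODE : ∀ t ≥ (0:ℝ), deriv (deriv u) t + (2*δ) • deriv u t + A (u t) = g t) :
    ∀ t ≥ (0:ℝ),
      deriv (fun s => ‖deriv u s‖^2 + ‖S (u s)‖^2 + 2*μ*(@inner ℝ H _ (deriv u s) (Q (u s)))) t ≤
        -(μ/2) * (‖deriv u t‖^2 + ‖S (u t)‖^2 + 2*μ*(@inner ℝ H _ (deriv u t) (Q (u t))))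
        + (2/δ) * ‖g t‖^2 := by
  have hμ0 : 0 < μ := by rw [hμ]; positivity
  have hμδ : μ ≤ δ / 2 := hμ ▸ (min_le_right _ _).trans (min_le_left _ _)
  have hμν : 5 * δ * μ ≤ ν := by
    have := hμ ▸ (min_le_right _ _).trans (min_le_right (δ / 2) (ν / (5 * δ)))
    rw [le_div_iff₀ (by positivity)] at this
    linarith
  intro t ht
  have hu' : HasDerivAt u (deriv u t) t := (hu.differentiable two_ne_zero t).hasDerivAt
  have hu'' : HasDerivAt (deriv u) (deriv (deriv u) t) t :=
    (hu.differentiable_deriv_two t).hasDerivAt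
  have hacc : deriv (deriv u) t = g t - (2 * δ) • deriv u t - A (u t) := by
    rw [← hODE t ht]; abel
  change deriv (fun s ↦ modifiedEnergy S Q μ (deriv u s) (u s)) t
    ≤ -(μ / 2) * modifiedEnergy S Q μ (deriv u t) (u t) + (2 / δ) * ‖g t‖ ^ 2
  rw [(hasDerivAt_modifiedEnergy S Q μ hu'' hu').deriv, hacc]
  exact rate_of_modifiedEnergy_le hA.isSymmetric hS.isSymmetric hSA hQ1 hQ2.isSymmetric hQ3
    hδ hμ0 hμδ hμν hQbound _ _ _

/-- Differential inequality for the modified hyperbolic energy: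
Ê'(t) ≤ -(μ/2)Ê(t) + (2/δ)|g(t)|². -/
theorem stmt9 {H : Type*} [NormedAddCommGroup H] [InnerProductSpace ℝ H] [CompleteSpace H]
    (A S Q : H →L[ℝ] H)
    (hA : IsSelfAdjoint A) (hApos : ∀ u : H, 0 ≤ (@inner ℝ H _ (A u) (u)))
    (hS : IsSelfAdjoint S) (hSpos : ∀ u : H, 0 ≤ (@inner ℝ H _ (S u) (u))) (hSA : S.comp S = A)
    (hQ1 : Q.comp Q = Q) (hQ2 : IsSelfAdjoint Q)
    (hQ3 : LinearMap.range (Q : H →ₗ[ℝ] H) = (LinearMap.ker (A : H →ₗ[ℝ] H))ᗮ)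
    (ν δ : ℝ) (hν : 0 < ν) (hδ : 0 < δ)
    (hQbound : ∀ u : H, ‖Q u‖^2 ≤ (1/ν) * ‖S u‖^2)
    (μ : ℝ) (hμ : μ = min (min (1/2) (ν/2)) (min (δ/2) (ν/(5*δ))))
    (g : ℝ → H) (hg : Continuous g)
    (u : ℝ → H) (hu : ContDiff ℝ 2 u)
    (hODE : ∀ t ≥ (0:ℝ), deriv (deriv u) t + (2*δ) • deriv u t + A (u t) = g t) :
    ∀ t ≥ (0:ℝ),
      deriv (fun s => ‖deriv u s‖^2 + ‖S (u s)‖^2 + 2*μ*(@inner ℝ H _ (deriv u s) (Q (u s)))) t ≤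
        -(μ/2) * (‖deriv u t‖^2 + ‖S (u t)‖^2 + 2*μ*(@inner ℝ H _ (deriv u t) (Q (u t))))
        + (2/δ) * ‖g t‖^2 :=
  stmt9_general A S Q hA hS hSA hQ1 hQ2 hQ3 ν δ hν hδ hQbound μ hμ g u hu hODE
end

section
/- Let H be a real Hilbert space, δ > 0, K₀ ≥ 0, p > 0, q > 0, and let A be a self-adjoint nonnegative bounded operator. Let u ∈ C²([0,∞), H) satisfy u''(t) + 2δu'(t) + Au(t) = g(t) where g is continuous with |g(t)| ≤ K₀(|u(t)|^{1+p} + |A^{1/2}u(t)|^{1+q}) for all t ≥ 0. If there exists T ≥ 0 with u(T) = 0 and u'(T) = 0, then u(t) = 0 and u'(t) = 0 for all t ≥ 0. -/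
/-!
The phase vector `v = (u', S u, u)` in `H × H × H` has derivative `(u'', S u', u')`, and the
equation together with the superlinear bound on `g` gives `‖v'‖ ≤ K ‖v‖` wherever `‖v‖ ≤ 1`,
since there `‖u‖ ^ (1 + p) ≤ ‖u‖` and `‖S u‖ ^ (1 + q) ≤ ‖S u‖`. Around a zero of `v` Grönwall's
inequality, run forward and backward in time, makes `v` vanish on a neighbourhood, so the zero set
of `v` in `[0, ∞)` is open as well as closed.
-/

open Set Filter Topology

section Gronwall

variable {E : Type*} [NormedAddCommGroup E] [NormedSpace ℝ E] {f f' : ℝ → E} {K : ℝ}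

theorem eq_zero_of_norm_deriv_le_mul_norm_uIcc {a b : ℝ}
    (hf : ∀ t ∈ uIcc a b, HasDerivAt f (f' t) t)
    (bound : ∀ t ∈ uIcc a b, ‖f' t‖ ≤ K * ‖f t‖) (ha : f a = 0) : f b = 0 := by
  rcases le_total a b with hab | hba
  · rw [uIcc_of_le hab] at hf bound
    exact eq_zero_of_abs_deriv_le_mul_abs_self_of_eq_zero_right
      (fun t ht => (hf t ht).continuousAt.continuousWithinAt)
      (fun t ht => (hf t (Ico_subset_Icc_self ht)).hasDerivWithinAt) ha
      (fun t ht => bound t (Ico_subset_Icc_self ht)) b ⟨hab, le_rfl⟩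
  · rw [uIcc_of_ge hba] at hf bound
    have hneg : ∀ t ∈ Icc (-a) (-b), -t ∈ Icc b a := fun t ht =>
      ⟨by linarith [ht.2], by linarith [ht.1]⟩
    have hrev : ∀ t ∈ Icc (-a) (-b), HasDerivAt (fun s => f (-s)) (-f' (-t)) t := fun t ht => by
      simpa [Function.comp_def] using (hf (-t) (hneg t ht)).scomp t (hasDerivAt_neg t)
    simpa using eq_zero_of_abs_deriv_le_mul_abs_self_of_eq_zero_right (f := fun s => f (-s))
      (fun t ht => (hrev t ht).continuousAt.continuousWithinAt)
      (fun t ht => (hrev t (Ico_subset_Icc_self ht)).hasDerivWithinAt) (by simpa using ha)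
      (fun t ht => by simpa using bound (-t) (hneg t (Ico_subset_Icc_self ht))) (-b)
      ⟨neg_le_neg hba, le_rfl⟩

variable {s : Set ℝ} {ε : ℝ}

theorem eventually_eq_zero_of_norm_deriv_le_mul_norm_near_zero (hs : s.OrdConnected)
    (hε : 0 < ε) (hf : ∀ t ∈ s, HasDerivAt f (f' t) t)
    (bound : ∀ t ∈ s, ‖f t‖ ≤ ε → ‖f' t‖ ≤ K * ‖f t‖) {x : ℝ} (hx : x ∈ s) (h0 : f x = 0) :
    ∀ᶠ y in 𝓝[s] x, f y = 0 := by
  obtain ⟨η, hη, hsmall⟩ : ∃ η > 0, ∀ y ∈ Metric.ball x η, ‖f y‖ ≤ ε := by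
    have : ∀ᶠ y in 𝓝 x, ‖f y‖ < ε :=
      (hf x hx).continuousAt.norm.eventually (gt_mem_nhds (by simpa [h0] using hε))
    obtain ⟨η, hη, h⟩ := Metric.eventually_nhds_iff_ball.mp this
    exact ⟨η, hη, fun y hy => (h y hy).le⟩
  filter_upwards [inter_mem_nhdsWithin s (Metric.ball_mem_nhds x hη), self_mem_nhdsWithin]
    with y hyη hys
  have hsub : uIcc x y ⊆ s ∩ Metric.ball x η :=
    subset_inter (hs.uIcc_subset hx hys)
      ((Real.ball_eq_Ioo x η ▸ ordConnected_Ioo).uIcc_subset (Metric.mem_ball_self hη) hyη.2)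
  exact eq_zero_of_norm_deriv_le_mul_norm_uIcc (fun t ht => hf t (hsub ht).1)
    (fun t ht => bound t (hsub ht).1 (hsmall t (hsub ht).2)) h0

theorem eqOn_zero_of_norm_deriv_le_mul_norm_near_zero (hs : s.OrdConnected)
    (hε : 0 < ε) (hf : ∀ t ∈ s, HasDerivAt f (f' t) t)
    (bound : ∀ t ∈ s, ‖f t‖ ≤ ε → ‖f' t‖ ≤ K * ‖f t‖) {t₀ : ℝ} (ht₀ : t₀ ∈ s) (h0 : f t₀ = 0) :
    EqOn f 0 s := by
  intro t ht
  refine hs.isPreconnected.induction₂' (fun x y => f x = 0 → f y = 0) (fun x hx => ?_)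
    (fun x y z _ _ _ hxy hyz hx => hyz (hxy hx)) ht₀ ht h0
  by_cases hfx : f x = 0
  · filter_upwards [eventually_eq_zero_of_norm_deriv_le_mul_norm_near_zero hs hε hf bound hx hfx]
      with y hy
    exact ⟨fun _ => hy, fun _ => hfx⟩
  · filter_upwards [nhdsWithin_le_nhds ((hf x hx).continuousAt.eventually_ne hfx)] with y hy
    exact ⟨fun h => absurd h hfx, fun h => absurd h hy⟩

end Gronwall

theorem norm_phase_deriv_le_mul_norm_phase {H : Type*} [NormedAddCommGroup H] [NormedSpace ℝ H]
    (S : H →L[ℝ] H) {δ K₀ p q : ℝ} (hK₀ : 0 ≤ K₀) (hp : 0 ≤ p) (hq : 0 ≤ q) {x y w : H}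
    (hw : ‖w + (2 * δ) • y + S (S x)‖ ≤ K₀ * (‖x‖ ^ ((1:ℝ) + p) + ‖S x‖ ^ ((1:ℝ) + q)))
    (hsmall : ‖(y, S x, x)‖ ≤ 1) :
    ‖(w, S y, y)‖ ≤ (2 * K₀ + ‖2 * δ‖ + ‖S‖ + 1) * ‖(y, S x, x)‖ := by
  set c := ‖(y, S x, x)‖
  have hy : ‖y‖ ≤ c := norm_fst_le (y, S x, x)
  have hSx : ‖S x‖ ≤ c := (norm_fst_le (S x, x)).trans (norm_snd_le (y, S x, x))
  have hx : ‖x‖ ≤ c := (norm_snd_le (S x, x)).trans (norm_snd_le (y, S x, x))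
  have hsuper : K₀ * (‖x‖ ^ ((1:ℝ) + p) + ‖S x‖ ^ ((1:ℝ) + q)) ≤ 2 * K₀ * c := by
    have h1 := Real.rpow_le_self_of_le_one (norm_nonneg x) (hx.trans hsmall)
      (le_add_of_nonneg_right hp)
    have h2 := Real.rpow_le_self_of_le_one (norm_nonneg (S x)) (hSx.trans hsmall)
      (le_add_of_nonneg_right hq)
    nlinarith
  have hSSx : ‖S (S x)‖ ≤ ‖S‖ * c := (S.le_opNorm _).trans (by gcongr)
  have hδy : ‖(2 * δ) • y‖ ≤ ‖2 * δ‖ * c := (norm_smul _ _).trans_le (by gcongr)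
  have hw' : ‖w‖ ≤ (2 * K₀ + ‖2 * δ‖ + ‖S‖) * c := calc
    ‖w‖ = ‖(w + (2 * δ) • y + S (S x)) - (2 * δ) • y - S (S x)‖ := by abel_nf
    _ ≤ ‖w + (2 * δ) • y + S (S x)‖ + ‖(2 * δ) • y‖ + ‖S (S x)‖ :=
      (norm_sub_le _ _).trans (add_le_add_left (norm_sub_le _ _) _)
    _ ≤ (2 * K₀ + ‖2 * δ‖ + ‖S‖) * c := by linarith
  have hSy : ‖S y‖ ≤ ‖S‖ * c := (S.le_opNorm _).trans (by gcongr)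
  simp only [Prod.norm_def]
  refine max_le (hw'.trans ?_) (max_le (hSy.trans ?_) (hy.trans ?_)) <;>
    nlinarith [norm_nonneg S, norm_nonneg (2 * δ), norm_nonneg (y, S x, x)]

theorem stmt11_general {H : Type*} [NormedAddCommGroup H] [InnerProductSpace ℝ H]
    (A S : H →L[ℝ] H)
    (hSA : S.comp S = A)
    (δ K₀ p q : ℝ) (hK₀ : 0 ≤ K₀) (hp : 0 < p) (hq : 0 < q)
    (u : ℝ → H) (hu : ContDiff ℝ 2 u)
    (g : ℝ → H)
    (hODE : ∀ t ≥ (0:ℝ), deriv (deriv u) t + (2*δ) • deriv u t + A (u t) = g t)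
    (hgb : ∀ t ≥ (0:ℝ), ‖g t‖ ≤ K₀ * (‖u t‖ ^ ((1:ℝ)+p) + ‖S (u t)‖ ^ ((1:ℝ)+q)))
    (T : ℝ) (hT : 0 ≤ T) (huT : u T = 0) (huT' : deriv u T = 0) :
    ∀ t ≥ (0:ℝ), u t = 0 ∧ deriv u t = 0 := by
  have hu' : Differentiable ℝ u := hu.differentiable two_ne_zero
  have hu'' : Differentiable ℝ (deriv u) := hu.differentiable_deriv_two
  set phase : ℝ → H × H × H := fun t => (deriv u t, S (u t), u t)
  have hphase : ∀ t ∈ Ici (0:ℝ),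
      HasDerivAt phase (deriv (deriv u) t, S (deriv u t), deriv u t) t := fun t _ =>
    (hu'' t).hasDerivAt.prodMk ((S.hasFDerivAt.comp_hasDerivAt t (hu' t).hasDerivAt).prodMk
      (hu' t).hasDerivAt)
  have hbound : ∀ t ∈ Ici (0:ℝ), ‖phase t‖ ≤ 1 →
      ‖(deriv (deriv u) t, S (deriv u t), deriv u t)‖ ≤ (2 * K₀ + ‖2 * δ‖ + ‖S‖ + 1) * ‖phase t‖ :=
    fun t ht => norm_phase_deriv_le_mul_norm_phase S hK₀ hp.le hq.le (by
      rw [← ContinuousLinearMap.comp_apply, hSA, hODE t ht]; exact hgb t ht)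
  have hzero : EqOn phase 0 (Ici 0) :=
    eqOn_zero_of_norm_deriv_le_mul_norm_near_zero ordConnected_Ici one_pos hphase hbound hT
      (by simp [phase, huT, huT'])
  intro t ht
  have := hzero (mem_Ici.mpr ht)
  simp only [phase, Pi.zero_apply, Prod.mk_eq_zero] at this
  exact ⟨this.2.2, this.1⟩

/-- Forward and backward uniqueness of the null solution for the damped equation with
a superlinear right-hand side. -/
theorem stmt11 {H : Type*} [NormedAddCommGroup H] [InnerProductSpace ℝ H] [CompleteSpace H]
    (A S : H →L[ℝ] H)
    (hA : IsSelfAdjoint A) (hApos : ∀ u : H, 0 ≤ (@inner ℝ H _ (A u) (u)))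
    (hS : IsSelfAdjoint S) (hSpos : ∀ u : H, 0 ≤ (@inner ℝ H _ (S u) (u))) (hSA : S.comp S = A)
    (δ K₀ p q : ℝ) (hδ : 0 < δ) (hK₀ : 0 ≤ K₀) (hp : 0 < p) (hq : 0 < q)
    (u : ℝ → H) (hu : ContDiff ℝ 2 u)
    (g : ℝ → H) (hg : Continuous g)
    (hODE : ∀ t ≥ (0:ℝ), deriv (deriv u) t + (2*δ) • deriv u t + A (u t) = g t)
    (hgb : ∀ t ≥ (0:ℝ), ‖g t‖ ≤ K₀ * (‖u t‖ ^ ((1:ℝ)+p) + ‖S (u t)‖ ^ ((1:ℝ)+q)))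
    (T : ℝ) (hT : 0 ≤ T) (huT : u T = 0) (huT' : deriv u T = 0) :
    ∀ t ≥ (0:ℝ), u t = 0 ∧ deriv u t = 0 :=
  stmt11_general A S hSA δ K₀ p q hK₀ hp hq u hu g hODE hgb T hT huT huT'
end

section
/- Let δ > 0, γ₀ > 0 with γ₀ ≠ δ - √(δ² - λ) and γ₀ ≠ δ + √(δ² - λ) when λ < δ², and γ₀ ≠ δ when λ ≥ δ². Let g : [0,∞) → ℝ be continuous with |g(t)| ≤ K e^{-γ₀ t} for all t ≥ 0 and some K ≥ 0. If λ > δ², set φ = √(λ - δ²) and define for γ₀ < δ: w(t) = (1/φ)∫₀ᵗ e^{-δ(t-s)} sin(φ(t-s)) g(s) ds, and for γ₀ > δ: w(t) = -(1/φ)∫ₜ^∞ e^{-δ(t-s)} sin(φ(t-s)) g(s) ds. Then in either case w is a solution of w'' + 2δw' + λw = g on [0,∞), and there exists a constant Γ depending only on γ₀, δ, λ such that |w(t)| + |w'(t)| ≤ Γ K e^{-γ₀ t} for all t ≥ 0. -/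
/-!
Variation of constants. If `P' = e^{δs} cos(φs) g` and `Q' = e^{δs} sin(φs) g`, then
`w = φ⁻¹ e^{-δt} (sin(φt) P - cos(φt) Q)` solves `w'' + 2δw' + (δ² + φ²)w = g`: by the addition
formulas for sine and cosine, the terms containing `P'` and `Q'` cancel in `w'` and add up to `g`
in `w''`. Both integrals of the statement have this shape, with `P, Q` the integrals of these
forcings over `[0, t]` when `γ₀ < δ` (they grow like `e^{(δ-γ₀)t}`), or minus their tails over
`(t, ∞)` when `γ₀ > δ` (they decay like `e^{(δ-γ₀)t}`). Either way `|P t|, |Q t|` are at most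
`K e^{(δ-γ₀)t} / |δ-γ₀|`, and the prefactor `e^{-δt}` leaves the rate `e^{-γ₀t}`.
-/

open Real Filter MeasureTheory intervalIntegral

open Set

noncomputable def dampedSin (δ φ t : ℝ) : ℝ := exp (-δ * t) * sin (φ * t)

noncomputable def dampedCos (δ φ t : ℝ) : ℝ := exp (-δ * t) * cos (φ * t)

section DampedTrig

variable (δ φ t s : ℝ)

theorem hasDerivAt_dampedSin :
    HasDerivAt (dampedSin δ φ) (φ * dampedCos δ φ t - δ * dampedSin δ φ t) t := by
  refine (((hasDerivAt_id t).const_mul (-δ)).exp.mul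
    ((hasDerivAt_id t).const_mul φ).sin).congr_deriv ?_
  simp only [dampedSin, dampedCos, id]; ring

theorem hasDerivAt_dampedCos :
    HasDerivAt (dampedCos δ φ) (-(φ * dampedSin δ φ t) - δ * dampedCos δ φ t) t := by
  refine (((hasDerivAt_id t).const_mul (-δ)).exp.mul
    ((hasDerivAt_id t).const_mul φ).cos).congr_deriv ?_
  simp only [dampedSin, dampedCos, id]; ring

theorem abs_dampedSin_le : |dampedSin δ φ t| ≤ exp (-δ * t) := by
  rw [dampedSin, abs_mul, abs_exp]
  exact mul_le_of_le_one_right (exp_pos _).le (abs_sin_le_one _)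

theorem abs_dampedCos_le : |dampedCos δ φ t| ≤ exp (-δ * t) := by
  rw [dampedCos, abs_mul, abs_exp]
  exact mul_le_of_le_one_right (exp_pos _).le (abs_cos_le_one _)

theorem dampedSin_sub : dampedSin δ φ (t - s) =
    dampedSin δ φ t * dampedCos (-δ) φ s - dampedCos δ φ t * dampedSin (-δ) φ s := by
  simp only [dampedSin, dampedCos, mul_sub, sin_sub, neg_neg, sub_eq_add_neg (-δ * t), exp_add]
  ring_nf

theorem dampedCos_sub : dampedCos δ φ (t - s) =
    dampedCos δ φ t * dampedCos (-δ) φ s + dampedSin δ φ t * dampedSin (-δ) φ s := by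
  simp only [dampedSin, dampedCos, mul_sub, cos_sub, neg_neg, sub_eq_add_neg (-δ * t), exp_add]
  ring_nf

theorem continuous_dampedSin : Continuous (dampedSin δ φ) := by
  unfold dampedSin; fun_prop

theorem continuous_dampedCos : Continuous (dampedCos δ φ) := by
  unfold dampedCos; fun_prop

end DampedTrig

noncomputable def duhamel (δ φ : ℝ) (P Q : ℝ → ℝ) (t : ℝ) : ℝ :=
  φ⁻¹ * (dampedSin δ φ t * P t - dampedCos δ φ t * Q t)

/-- Equals `w' + δw` for `w = duhamel δ φ P Q` (see `hasDerivAt_duhamel`). -/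
noncomputable def duhamelConj (δ φ : ℝ) (P Q : ℝ → ℝ) (t : ℝ) : ℝ :=
  dampedCos δ φ t * P t + dampedSin δ φ t * Q t

section Duhamel

variable {δ φ : ℝ} {g P Q : ℝ → ℝ}

theorem hasDerivAt_duhamel (hφ : φ ≠ 0)
    (hP : ∀ s, HasDerivAt P (dampedCos (-δ) φ s * g s) s)
    (hQ : ∀ s, HasDerivAt Q (dampedSin (-δ) φ s * g s) s) (t : ℝ) :
    HasDerivAt (duhamel δ φ P Q) (duhamelConj δ φ P Q t - δ * duhamel δ φ P Q t) t := by
  have hW : dampedSin δ φ t * dampedCos (-δ) φ t - dampedCos δ φ t * dampedSin (-δ) φ t = 0 := by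
    simpa [dampedSin] using (dampedSin_sub δ φ t t).symm
  refine ((((hasDerivAt_dampedSin δ φ t).mul (hP t)).sub
    ((hasDerivAt_dampedCos δ φ t).mul (hQ t))).const_mul φ⁻¹).congr_deriv ?_
  simp only [duhamel, duhamelConj]
  field_simp
  linear_combination g t * hW

theorem hasDerivAt_duhamelConj
    (hP : ∀ s, HasDerivAt P (dampedCos (-δ) φ s * g s) s)
    (hQ : ∀ s, HasDerivAt Q (dampedSin (-δ) φ s * g s) s) (t : ℝ) :
    HasDerivAt (duhamelConj δ φ P Q)
      (g t - δ * duhamelConj δ φ P Q t - φ ^ 2 * duhamel δ φ P Q t) t := by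
  have hW : dampedCos δ φ t * dampedCos (-δ) φ t + dampedSin δ φ t * dampedSin (-δ) φ t = 1 := by
    simpa [dampedCos] using (dampedCos_sub δ φ t t).symm
  refine (((hasDerivAt_dampedCos δ φ t).mul (hP t)).add
    ((hasDerivAt_dampedSin δ φ t).mul (hQ t))).congr_deriv ?_
  simp only [duhamel, duhamelConj]
  field_simp
  linear_combination g t * hW

theorem duhamel_ode (hφ : φ ≠ 0)
    (hP : ∀ s, HasDerivAt P (dampedCos (-δ) φ s * g s) s)
    (hQ : ∀ s, HasDerivAt Q (dampedSin (-δ) φ s * g s) s) (t : ℝ) :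
    deriv (deriv (duhamel δ φ P Q)) t + 2 * δ * deriv (duhamel δ φ P Q) t
      + (δ ^ 2 + φ ^ 2) * duhamel δ φ P Q t = g t := by
  have hw : deriv (duhamel δ φ P Q) = fun t => duhamelConj δ φ P Q t - δ * duhamel δ φ P Q t :=
    funext fun t => (hasDerivAt_duhamel hφ hP hQ t).deriv
  have hw' : HasDerivAt (fun t => duhamelConj δ φ P Q t - δ * duhamel δ φ P Q t)
      (g t - δ * duhamelConj δ φ P Q t - φ ^ 2 * duhamel δ φ P Q t
        - δ * (duhamelConj δ φ P Q t - δ * duhamel δ φ P Q t)) t :=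
    (hasDerivAt_duhamelConj hP hQ t).sub ((hasDerivAt_duhamel hφ hP hQ t).const_mul δ)
  rw [hw, hw'.deriv]
  ring

theorem abs_duhamel_add_abs_deriv_le (hφ : φ ≠ 0)
    (hP : ∀ s, HasDerivAt P (dampedCos (-δ) φ s * g s) s)
    (hQ : ∀ s, HasDerivAt Q (dampedSin (-δ) φ s * g s) s) (t : ℝ) :
    |duhamel δ φ P Q t| + |deriv (duhamel δ φ P Q) t|
      ≤ ((1 + |δ|) * |φ|⁻¹ + 1) * (exp (-δ * t) * (|P t| + |Q t|)) := by
  set E := exp (-δ * t) * (|P t| + |Q t|)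
  have hS := abs_dampedSin_le δ φ t
  have hC := abs_dampedCos_le δ φ t
  have hw : |duhamel δ φ P Q t| ≤ |φ|⁻¹ * E := by
    rw [duhamel, abs_mul, abs_inv]
    gcongr
    calc _ ≤ |dampedSin δ φ t| * |P t| + |dampedCos δ φ t| * |Q t| := by
          simpa only [abs_mul] using abs_sub (dampedSin δ φ t * P t) (dampedCos δ φ t * Q t)
      _ ≤ E := by simp only [E, mul_add]; gcongr
  have hz : |duhamelConj δ φ P Q t| ≤ E := by
    rw [duhamelConj]
    calc _ ≤ |dampedCos δ φ t| * |P t| + |dampedSin δ φ t| * |Q t| := by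
          simpa only [abs_mul] using abs_add_le (dampedCos δ φ t * P t) (dampedSin δ φ t * Q t)
      _ ≤ E := by simp only [E, mul_add]; gcongr
  have hw' : |deriv (duhamel δ φ P Q) t| ≤ E + |δ| * (|φ|⁻¹ * E) := by
    rw [(hasDerivAt_duhamel hφ hP hQ t).deriv]
    calc _ ≤ |duhamelConj δ φ P Q t| + |δ| * |duhamel δ φ P Q t| := by
          simpa only [abs_mul] using abs_sub (duhamelConj δ φ P Q t) (δ * duhamel δ φ P Q t)
      _ ≤ _ := by gcongr
  linarith

end Duhamel

section ExpBounds

variable {f : ℝ → ℝ} {a K : ℝ}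

theorem abs_intervalIntegral_le_of_abs_le_exp (ha : 0 < a) {t : ℝ}
    (ht : 0 ≤ t) (hb : ∀ s ∈ Icc 0 t, |f s| ≤ K * exp (a * s)) :
    |∫ s in 0..t, f s| ≤ K / a * exp (a * t) := by
  have hK : 0 ≤ K := by simpa using (abs_nonneg _).trans (hb 0 ⟨le_rfl, ht⟩)
  calc |∫ s in 0..t, f s| ≤ ∫ s in 0..t, K * exp (a * s) := by
        rw [← Real.norm_eq_abs]
        exact intervalIntegral.norm_integral_le_of_norm_le ht
          (ae_of_all _ fun s hs => hb s (Ioc_subset_Icc_self hs))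
          ((by fun_prop : Continuous fun s => K * exp (a * s)).intervalIntegrable _ _)
    _ = K / a * (exp (a * t) - 1) := by
        rw [intervalIntegral.integral_const_mul, integral_comp_mul_left (fun s => exp s) ha.ne',
          integral_exp]
        simp only [mul_zero, exp_zero, smul_eq_mul]
        ring
    _ ≤ K / a * exp (a * t) := by gcongr; linarith

theorem abs_setIntegral_Ioi_le_of_abs_le_exp (ha : a < 0) {t : ℝ}
    (hb : ∀ s ≥ t, |f s| ≤ K * exp (a * s)) :
    |∫ s in Ioi t, f s| ≤ K / (-a) * exp (a * t) := by
  calc |∫ s in Ioi t, f s| ≤ ∫ s in Ioi t, K * exp (a * s) := by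
        rw [← Real.norm_eq_abs]
        exact norm_integral_le_of_norm_le ((integrableOn_exp_mul_Ioi ha t).const_mul K)
          ((ae_restrict_iff' measurableSet_Ioi).2 (ae_of_all _ fun s hs => hb s (le_of_lt hs)))
    _ = K / (-a) * exp (a * t) := by
        rw [MeasureTheory.integral_const_mul, integral_exp_mul_Ioi ha]
        ring

theorem integrableOn_Ioi_of_abs_le_exp (hf : Continuous f) (ha : a < 0)
    (hb : ∀ s ≥ 0, |f s| ≤ K * exp (a * s)) (t : ℝ) : IntegrableOn f (Ioi t) := by
  have h0 : IntegrableOn f (Ioi 0) :=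
    Integrable.mono' ((integrableOn_exp_mul_Ioi ha 0).const_mul K) hf.aestronglyMeasurable.restrict
      ((ae_restrict_iff' measurableSet_Ioi).2 (ae_of_all _ fun s hs => hb s (le_of_lt hs)))
  refine ((hf.integrableOn_Icc (a := min t 0) (b := 0)).union h0).mono_set fun s hs => ?_
  rcases le_or_gt s 0 with hs0 | hs0
  · exact Or.inl ⟨(min_le_left t 0).trans (le_of_lt hs), hs0⟩
  · exact Or.inr hs0

end ExpBounds

theorem hasDerivAt_setIntegral_Ioi {f : ℝ → ℝ} (hf : Continuous f)
    (hint : ∀ a, IntegrableOn f (Ioi a)) (t : ℝ) :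
    HasDerivAt (fun t => ∫ s in Ioi t, f s) (-f t) t := by
  have hsplit : (fun t => ∫ s in Ioi t, f s) = fun t => (∫ s in Ioi 0, f s) - ∫ s in 0..t, f s :=
    funext fun t => eq_sub_of_add_eq' (integral_interval_add_Ioi (hint 0) (hint t))
  rw [hsplit]
  exact (hf.integral_hasStrictDerivAt 0 t).hasDerivAt.const_sub _

section Kernel

variable {δ φ : ℝ} {g : ℝ → ℝ}

theorem intervalIntegral_dampedSin_sub_mul (hg : Continuous g) (t a b : ℝ) :
    ∫ s in a..b, dampedSin δ φ (t - s) * g s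
      = dampedSin δ φ t * (∫ s in a..b, dampedCos (-δ) φ s * g s)
        - dampedCos δ φ t * ∫ s in a..b, dampedSin (-δ) φ s * g s := by
  have h1 : IntervalIntegrable (fun s => dampedCos (-δ) φ s * g s) volume a b :=
    ((continuous_dampedCos (-δ) φ).mul hg).intervalIntegrable a b
  have h2 : IntervalIntegrable (fun s => dampedSin (-δ) φ s * g s) volume a b :=
    ((continuous_dampedSin (-δ) φ).mul hg).intervalIntegrable a b
  simp_rw [dampedSin_sub, sub_mul, mul_assoc]
  rw [intervalIntegral.integral_sub (h1.const_mul _) (h2.const_mul _),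
    intervalIntegral.integral_const_mul, intervalIntegral.integral_const_mul]

theorem setIntegral_Ioi_dampedSin_sub_mul {t : ℝ}
    (h1 : IntegrableOn (fun s => dampedCos (-δ) φ s * g s) (Ioi t))
    (h2 : IntegrableOn (fun s => dampedSin (-δ) φ s * g s) (Ioi t)) :
    ∫ s in Ioi t, dampedSin δ φ (t - s) * g s
      = dampedSin δ φ t * (∫ s in Ioi t, dampedCos (-δ) φ s * g s)
        - dampedCos δ φ t * ∫ s in Ioi t, dampedSin (-δ) φ s * g s := by
  simp_rw [dampedSin_sub, sub_mul, mul_assoc]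
  rw [integral_sub (h1.const_mul _) (h2.const_mul _), MeasureTheory.integral_const_mul,
    MeasureTheory.integral_const_mul]

end Kernel

section Solution

variable {δ φ γ K : ℝ} {g : ℝ → ℝ}

theorem abs_mul_le_exp_mul {s x y : ℝ} (hx : |x| ≤ exp (δ * s))
    (hy : |y| ≤ K * exp (-γ * s)) : |x * y| ≤ K * exp ((δ - γ) * s) := by
  rw [abs_mul, sub_mul, sub_eq_add_neg, ← neg_mul, exp_add, mul_left_comm]
  exact mul_le_mul hx hy (abs_nonneg _) (exp_pos _).le

theorem abs_dampedCos_neg_mul_le {s y : ℝ} (hy : |y| ≤ K * exp (-γ * s)) :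
    |dampedCos (-δ) φ s * y| ≤ K * exp ((δ - γ) * s) :=
  abs_mul_le_exp_mul (by simpa using abs_dampedCos_le (-δ) φ s) hy

theorem abs_dampedSin_neg_mul_le {s y : ℝ} (hy : |y| ≤ K * exp (-γ * s)) :
    |dampedSin (-δ) φ s * y| ≤ K * exp ((δ - γ) * s) :=
  abs_mul_le_exp_mul (by simpa using abs_dampedSin_le (-δ) φ s) hy

theorem duhamel_ode_and_decay {P Q : ℝ → ℝ} {M : ℝ} (hφ : φ ≠ 0)
    (hP : ∀ s, HasDerivAt P (dampedCos (-δ) φ s * g s) s)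
    (hQ : ∀ s, HasDerivAt Q (dampedSin (-δ) φ s * g s) s)
    (hPb : ∀ t ≥ 0, |P t| ≤ M * exp ((δ - γ) * t))
    (hQb : ∀ t ≥ 0, |Q t| ≤ M * exp ((δ - γ) * t)) :
    (∀ t, deriv (deriv (duhamel δ φ P Q)) t + 2 * δ * deriv (duhamel δ φ P Q) t
      + (δ ^ 2 + φ ^ 2) * duhamel δ φ P Q t = g t) ∧
    ∀ t ≥ 0, |duhamel δ φ P Q t| + |deriv (duhamel δ φ P Q) t|
      ≤ ((1 + |δ|) * |φ|⁻¹ + 1) * (2 * M) * exp (-γ * t) := by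
  refine ⟨duhamel_ode hφ hP hQ, fun t ht => (abs_duhamel_add_abs_deriv_le hφ hP hQ t).trans ?_⟩
  have hexp : exp (-δ * t) * exp ((δ - γ) * t) = exp (-γ * t) := by rw [← exp_add]; ring_nf
  calc _ ≤ ((1 + |δ|) * |φ|⁻¹ + 1) * (exp (-δ * t) * (2 * (M * exp ((δ - γ) * t)))) := by
        gcongr; linarith [hPb t ht, hQb t ht]
    _ = _ := by rw [← hexp]; ring

theorem ode_and_decay_of_eq_intervalIntegral (hφ : φ ≠ 0) (hg : Continuous g) (hγ : γ < δ)
    (hgb : ∀ t ≥ 0, |g t| ≤ K * exp (-γ * t)) {w : ℝ → ℝ}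
    (hw : w = fun t => φ⁻¹ * ∫ s in 0..t, dampedSin δ φ (t - s) * g s) :
    (∀ t, deriv (deriv w) t + 2 * δ * deriv w t + (δ ^ 2 + φ ^ 2) * w t = g t) ∧
    ∀ t ≥ 0, |w t| + |deriv w t|
      ≤ ((1 + |δ|) * |φ|⁻¹ + 1) * (2 * (K / (δ - γ))) * exp (-γ * t) := by
  have hw_duhamel : w = duhamel δ φ (fun t => ∫ s in 0..t, dampedCos (-δ) φ s * g s)
      (fun t => ∫ s in 0..t, dampedSin (-δ) φ s * g s) := by
    rw [hw]; funext t; rw [intervalIntegral_dampedSin_sub_mul hg]; rfl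
  subst hw_duhamel
  have hc : 0 < δ - γ := sub_pos.2 hγ
  exact duhamel_ode_and_decay hφ
    (fun s => (((continuous_dampedCos (-δ) φ).mul hg).integral_hasStrictDerivAt 0 s).hasDerivAt)
    (fun s => (((continuous_dampedSin (-δ) φ).mul hg).integral_hasStrictDerivAt 0 s).hasDerivAt)
    (fun t ht => abs_intervalIntegral_le_of_abs_le_exp hc ht
      fun s hs => abs_dampedCos_neg_mul_le (hgb s hs.1))
    (fun t ht => abs_intervalIntegral_le_of_abs_le_exp hc ht
      fun s hs => abs_dampedSin_neg_mul_le (hgb s hs.1))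

theorem ode_and_decay_of_eq_setIntegral_Ioi (hφ : φ ≠ 0) (hg : Continuous g) (hγ : δ < γ)
    (hgb : ∀ t ≥ 0, |g t| ≤ K * exp (-γ * t)) {w : ℝ → ℝ}
    (hw : w = fun t => -φ⁻¹ * ∫ s in Ioi t, dampedSin δ φ (t - s) * g s) :
    (∀ t, deriv (deriv w) t + 2 * δ * deriv w t + (δ ^ 2 + φ ^ 2) * w t = g t) ∧
    ∀ t ≥ 0, |w t| + |deriv w t|
      ≤ ((1 + |δ|) * |φ|⁻¹ + 1) * (2 * (K / (γ - δ))) * exp (-γ * t) := by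
  have hc : δ - γ < 0 := sub_neg.2 hγ
  have hf1 := (continuous_dampedCos (-δ) φ).mul hg
  have hf2 := (continuous_dampedSin (-δ) φ).mul hg
  have hint1 :=
    integrableOn_Ioi_of_abs_le_exp hf1 hc fun s hs => abs_dampedCos_neg_mul_le (hgb s hs)
  have hint2 :=
    integrableOn_Ioi_of_abs_le_exp hf2 hc fun s hs => abs_dampedSin_neg_mul_le (hgb s hs)
  have hw_duhamel : w = duhamel δ φ (fun t => -∫ s in Ioi t, dampedCos (-δ) φ s * g s)
      (fun t => -∫ s in Ioi t, dampedSin (-δ) φ s * g s) := by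
    rw [hw]; funext t; rw [setIntegral_Ioi_dampedSin_sub_mul (hint1 t) (hint2 t), duhamel]; ring
  subst hw_duhamel
  rw [← neg_sub δ γ]
  exact duhamel_ode_and_decay hφ
    (fun s => (hasDerivAt_setIntegral_Ioi hf1 hint1 s).neg.congr_deriv (neg_neg _))
    (fun s => (hasDerivAt_setIntegral_Ioi hf2 hint2 s).neg.congr_deriv (neg_neg _))
    (fun t ht => (abs_neg _).trans_le <| abs_setIntegral_Ioi_le_of_abs_le_exp hc
      fun s hs => abs_dampedCos_neg_mul_le (hgb s (ht.trans hs)))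
    (fun t ht => (abs_neg _).trans_le <| abs_setIntegral_Ioi_le_of_abs_le_exp hc
      fun s hs => abs_dampedSin_neg_mul_le (hgb s (ht.trans hs)))

end Solution

theorem stmt14_general (δ lam γ₀ K : ℝ) (hlam : δ^2 < lam)
    (hne : γ₀ ≠ δ)
    (g : ℝ → ℝ) (hg : Continuous g)
    (hgb : ∀ t ≥ (0:ℝ), |g t| ≤ K * Real.exp (-γ₀ * t)) :
    ∃ Γ : ℝ, ∀ w : ℝ → ℝ,
      ((γ₀ < δ ∧ w = fun t => (1/Real.sqrt (lam - δ^2)) *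
          ∫ s in (0:ℝ)..t, Real.exp (-δ*(t-s)) * Real.sin (Real.sqrt (lam - δ^2)*(t-s)) * g s) ∨
       (δ < γ₀ ∧ w = fun t => -(1/Real.sqrt (lam - δ^2)) *
          ∫ s in Set.Ioi t, Real.exp (-δ*(t-s)) * Real.sin (Real.sqrt (lam - δ^2)*(t-s)) * g s)) →
      (∀ t ≥ (0:ℝ), deriv (deriv w) t + 2*δ*(deriv w t) + lam * w t = g t) ∧
      (∀ t ≥ (0:ℝ), |w t| + |deriv w t| ≤ Γ * K * Real.exp (-γ₀ * t)) := by
  set φ := Real.sqrt (lam - δ ^ 2)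
  have hφ : φ ≠ 0 := (Real.sqrt_pos.2 (sub_pos.2 hlam)).ne'
  have hlam_eq : lam = δ ^ 2 + φ ^ 2 := by rw [Real.sq_sqrt (sub_pos.2 hlam).le]; ring
  rw [hlam_eq]
  simp only [one_div]
  rcases hne.lt_or_gt with hγ | hγ
  · refine ⟨((1 + |δ|) * |φ|⁻¹ + 1) * (2 / (δ - γ₀)), fun w hw => ?_⟩
    obtain ⟨-, hw⟩ | ⟨hγ', -⟩ := hw
    · obtain ⟨hode, hdecay⟩ := ode_and_decay_of_eq_intervalIntegral hφ hg hγ hgb hw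
      exact ⟨fun t _ => hode t, fun t ht => (hdecay t ht).trans_eq (by ring)⟩
    · exact absurd hγ' hγ.not_gt
  · refine ⟨((1 + |δ|) * |φ|⁻¹ + 1) * (2 / (γ₀ - δ)), fun w hw => ?_⟩
    obtain ⟨hγ', -⟩ | ⟨-, hw⟩ := hw
    · exact absurd hγ' hγ.not_gt
    · obtain ⟨hode, hdecay⟩ := ode_and_decay_of_eq_setIntegral_Ioi hφ hg hγ hgb hw
      exact ⟨fun t _ => hode t, fun t ht => (hdecay t ht).trans_eq (by ring)⟩

/-- Special solution of the scalar non-homogeneous equation w'' + 2δw' + λw = g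
(λ > δ²) inheriting the exponential decay rate of the forcing term. -/
theorem stmt14 (δ lam γ₀ K : ℝ) (hδ : 0 < δ) (hlam : δ^2 < lam)
    (hγ₀ : 0 < γ₀) (hne : γ₀ ≠ δ) (hK : 0 ≤ K)
    (g : ℝ → ℝ) (hg : Continuous g)
    (hgb : ∀ t ≥ (0:ℝ), |g t| ≤ K * Real.exp (-γ₀ * t)) :
    ∃ Γ : ℝ, ∀ w : ℝ → ℝ,
      ((γ₀ < δ ∧ w = fun t => (1/Real.sqrt (lam - δ^2)) *
          ∫ s in (0:ℝ)..t, Real.exp (-δ*(t-s)) * Real.sin (Real.sqrt (lam - δ^2)*(t-s)) * g s) ∨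
       (δ < γ₀ ∧ w = fun t => -(1/Real.sqrt (lam - δ^2)) *
          ∫ s in Set.Ioi t, Real.exp (-δ*(t-s)) * Real.sin (Real.sqrt (lam - δ^2)*(t-s)) * g s)) →
      (∀ t ≥ (0:ℝ), deriv (deriv w) t + 2*δ*(deriv w t) + lam * w t = g t) ∧
      (∀ t ≥ (0:ℝ), |w t| + |deriv w t| ≤ Γ * K * Real.exp (-γ₀ * t)) :=
  stmt14_general δ lam γ₀ K hlam hne g hg hgb
end
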